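/- Let H⁺(x,y,z) = (1−x²)(1−xz) − y·x²·(1+xz) and fix reals 0 < ρ < 1 and 0 < δ < 2(1−ρ). Define x* = √(1 − 2ρ/(2−δ)), z* = (√(ρ²+δ²) − ρ)/(x*·δ), and y* = 2(√(ρ²+δ²) − δ)/(2 − δ − 2ρ). Then x*, y*, z* > 0, H⁺(x*,y*,z*) = 0, and at the point (x*,y*,z*) the proportionality relations (x·∂H⁺/∂x)/2 = (y·∂H⁺/∂y)/ρ = (z·∂H⁺/∂z)/δ hold. -/

import Mathlib

open MvPolynomial

/-! Everything is expressed through `p = x²`, `w = xz` and `q = yx²`: `H⁺` and the weighted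
partials `x ∂ₓH⁺`, `y ∂ᵧH⁺`, `z ∂_zH⁺` are polynomials in these three quantities. At the given
point `p`, `w`, `q` are rational in `ρ`, `δ` and `s = √(ρ² + δ²)`, so each required identity
becomes a polynomial identity modulo `s² = ρ² + δ²`. -/

/-- `H⁺(x,y,z) = (1 − x²)(1 − xz) − y·x²·(1 + xz)` as a polynomial in three variables
(variable `0` is `x`, `1` is `y`, `2` is `z`). -/
noncomputable def Hpos : MvPolynomial (Fin 3) ℝ :=
  (1 - X 0 ^ 2) * (1 - X 0 * X 2) - X 1 * X 0 ^ 2 * (1 + X 0 * X 2)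

section EvalHpos

variable (x y z : ℝ)

lemma eval_Hpos :
    eval ![x, y, z] Hpos = (1 - x ^ 2) * (1 - x * z) - y * x ^ 2 * (1 + x * z) := by
  simp [Hpos]

lemma mul_eval_pderiv_zero_Hpos :
    x * eval ![x, y, z] (pderiv 0 Hpos) =
      -2 * x ^ 2 * (1 - x * z) - x * z * (1 - x ^ 2)
        - 2 * (y * x ^ 2) * (1 + x * z) - y * x ^ 2 * (x * z) := by
  simp [Hpos, pderiv_X]
  ring

lemma mul_eval_pderiv_one_Hpos :
    y * eval ![x, y, z] (pderiv 1 Hpos) = -(y * x ^ 2 * (1 + x * z)) := by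
  simp [Hpos, pderiv_X]
  ring

lemma mul_eval_pderiv_two_Hpos :
    z * eval ![x, y, z] (pderiv 2 Hpos) =
      -(x * z * (1 - x ^ 2)) - y * x ^ 2 * (x * z) := by
  simp [Hpos, pderiv_X]
  ring

end EvalHpos

section ReducedRelations

variable {ρ δ s p w q : ℝ} (hs : s ^ 2 = ρ ^ 2 + δ ^ 2) (hδ : δ ≠ 0) (h2δ : 2 - δ ≠ 0)
  (hp : p = (2 - δ - 2 * ρ) / (2 - δ)) (hw : w = (s - ρ) / δ) (hq : q = 2 * (s - δ) / (2 - δ))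
include hs hδ h2δ hp hw hq

lemma reduced_Hpos_eq_zero : (1 - p) * (1 - w) - q * (1 + w) = 0 := by
  subst hp hw hq
  field_simp
  linear_combination (-2 : ℝ) * hs

lemma reduced_xy_proportion (hρ : ρ ≠ 0) :
    (-2 * p * (1 - w) - w * (1 - p) - 2 * q * (1 + w) - q * w) / 2 = -(q * (1 + w)) / ρ := by
  subst hp hw hq
  field_simp
  linear_combination (4 - 6 * ρ) * hs

lemma reduced_yz_proportion (hρ : ρ ≠ 0) :
    -(q * (1 + w)) / ρ = (-(w * (1 - p)) - q * w) / δ := by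
  subst hp hw hq
  field_simp
  linear_combination 2 * (ρ - δ) * hs

end ReducedRelations

theorem stmt11_general (ρ δ : ℝ) (hρ0 : 0 < ρ) (hδ0 : 0 < δ)
    (hδ : δ < 2 * (1 - ρ)) :
    let xs : ℝ := Real.sqrt (1 - 2 * ρ / (2 - δ))
    let zs : ℝ := (Real.sqrt (ρ ^ 2 + δ ^ 2) - ρ) / (xs * δ)
    let ys : ℝ := 2 * (Real.sqrt (ρ ^ 2 + δ ^ 2) - δ) / (2 - δ - 2 * ρ)
    0 < xs ∧ 0 < ys ∧ 0 < zs ∧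
    eval ![xs, ys, zs] Hpos = 0 ∧
    (xs * eval ![xs, ys, zs] (pderiv 0 Hpos)) / 2
      = (ys * eval ![xs, ys, zs] (pderiv 1 Hpos)) / ρ ∧
    (ys * eval ![xs, ys, zs] (pderiv 1 Hpos)) / ρ
      = (zs * eval ![xs, ys, zs] (pderiv 2 Hpos)) / δ := by
  intro xs zs ys
  set s := Real.sqrt (ρ ^ 2 + δ ^ 2)
  have h2δ : 0 < 2 - δ := by linarith
  have hc : 0 < 2 - δ - 2 * ρ := by linarith
  have hradicand : 0 < 1 - 2 * ρ / (2 - δ) := by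
    rw [sub_pos, div_lt_one h2δ]
    linarith
  have hs : s ^ 2 = ρ ^ 2 + δ ^ 2 := Real.sq_sqrt (by positivity)
  have hsρ : ρ < s := Real.lt_sqrt_of_sq_lt (by nlinarith)
  have hsδ : δ < s := Real.lt_sqrt_of_sq_lt (by nlinarith)
  have hx0 : 0 < xs := Real.sqrt_pos.mpr hradicand
  have hp : xs ^ 2 = (2 - δ - 2 * ρ) / (2 - δ) := by
    rw [Real.sq_sqrt hradicand.le]
    field_simp
  have hw : xs * zs = (s - ρ) / δ := by
    change xs * ((s - ρ) / (xs * δ)) = _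
    field_simp
  have hq : ys * xs ^ 2 = 2 * (s - δ) / (2 - δ) := by
    change 2 * (s - δ) / (2 - δ - 2 * ρ) * xs ^ 2 = _
    rw [hp]
    field_simp
  refine ⟨hx0, div_pos (by linarith) hc, div_pos (by linarith) (by positivity), ?_, ?_, ?_⟩
  · rw [eval_Hpos]
    exact reduced_Hpos_eq_zero hs hδ0.ne' h2δ.ne' hp hw hq
  · rw [mul_eval_pderiv_zero_Hpos, mul_eval_pderiv_one_Hpos]
    exact reduced_xy_proportion hs hδ0.ne' h2δ.ne' hp hw hq hρ0.ne'
  · rw [mul_eval_pderiv_one_Hpos, mul_eval_pderiv_two_Hpos]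
    exact reduced_yz_proportion hs hδ0.ne' h2δ.ne' hp hw hq hρ0.ne'

/-- The explicit point `(x*, y*, z*)` is positive, lies on `H⁺ = 0`, and satisfies the
critical-point proportionality relations `(x H⁺_x)/2 = (y H⁺_y)/ρ = (z H⁺_z)/δ`. -/
theorem stmt11 (ρ δ : ℝ) (hρ0 : 0 < ρ) (hρ1 : ρ < 1) (hδ0 : 0 < δ)
    (hδ : δ < 2 * (1 - ρ)) :
    let xs : ℝ := Real.sqrt (1 - 2 * ρ / (2 - δ))
    let zs : ℝ := (Real.sqrt (ρ ^ 2 + δ ^ 2) - ρ) / (xs * δ)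
    let ys : ℝ := 2 * (Real.sqrt (ρ ^ 2 + δ ^ 2) - δ) / (2 - δ - 2 * ρ)
    0 < xs ∧ 0 < ys ∧ 0 < zs ∧
    eval ![xs, ys, zs] Hpos = 0 ∧
    (xs * eval ![xs, ys, zs] (pderiv 0 Hpos)) / 2
      = (ys * eval ![xs, ys, zs] (pderiv 1 Hpos)) / ρ ∧
    (ys * eval ![xs, ys, zs] (pderiv 1 Hpos)) / ρ
      = (zs * eval ![xs, ys, zs] (pderiv 2 Hpos)) / δ :=
  stmt11_general ρ δ hρ0 hδ0 hδ
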